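/- (Second order estimate for dual quantization.) Let F : ℝ → ℝ be continuously differentiable with L-Lipschitz derivative F′. Let X be a real random variable with P(X ∈ [a,b]) = 1 and let Λ be uniformly distributed on [0,1] and independent of X. Then for every grid Γ in [a,b]: |E F(X) − E F(J_Γ(X,Λ))| ≤ L · E|X − J_Γ(X,Λ)|². -/

import Mathlib

/-!
For fixed `ξ`, the randomised quantization `J_Γ(ξ, Λ)` takes the two grid points around `ξ` with
the barycentric weights, so its mean is `ξ`. Hence the first-order term of the Taylor expansion of
`F` at `ξ` integrates to zero in `Λ`, and the remainder is at most `L |J_Γ(ξ, Λ) - ξ|²` by the mean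
value theorem applied to `F - F'(ξ) ·`. Independence of `X` and `Λ` turns the expectations into
integrals against the product of their laws, so by Fubini one may integrate in `Λ` first.
-/

open MeasureTheory ProbabilityTheory

/-- Index `j*(ξ)` of the segment `[x_j, x_{j+1})` of the grid containing `ξ`
(with default value `N`, corresponding to the closed last segment). -/
noncomputable def jstar (N : ℕ) (x : ℕ → ℝ) (ξ : ℝ) : ℕ :=
  if h : ∃ j, j ≤ N ∧ x j ≤ ξ ∧ ξ < x (j + 1) then h.choose else N

/-- The dual quantization operator `J_Γ(ξ, λ)` associated with the grid
`x 0 ≤ x 1 ≤ … ≤ x (N+1)`. -/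
noncomputable def dualQ (N : ℕ) (x : ℕ → ℝ) (ξ lam : ℝ) : ℝ :=
  if x (jstar N x ξ + 1) = x (jstar N x ξ) then ξ
  else if lam < (x (jstar N x ξ + 1) - ξ) / (x (jstar N x ξ + 1) - x (jstar N x ξ)) then
    x (jstar N x ξ)
  else x (jstar N x ξ + 1)

open Set

theorem abs_sub_sub_deriv_mul_le_of_lipschitzWith {F : ℝ → ℝ} {L : NNReal}
    (hF : Differentiable ℝ F) (hF' : LipschitzWith L (deriv F)) (ξ y : ℝ) :
    |F y - F ξ - deriv F ξ * (y - ξ)| ≤ L * |y - ξ| ^ 2 := by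
  have hderiv : ∀ z ∈ uIcc ξ y,
      HasDerivWithinAt (fun z => F z - deriv F ξ * z) (deriv F z - deriv F ξ) (uIcc ξ y) z :=
    fun z _ => ((hF z).hasDerivAt.sub ((hasDerivAt_id z).const_mul (deriv F ξ)
      |>.congr_deriv (mul_one _))).hasDerivWithinAt
  have hbound : ∀ z ∈ uIcc ξ y, ‖deriv F z - deriv F ξ‖ ≤ L * |y - ξ| := fun z hz =>
    calc ‖deriv F z - deriv F ξ‖ ≤ L * |z - ξ| := hF'.dist_le_mul z ξ
      _ ≤ L * |y - ξ| := mul_le_mul_of_nonneg_left (abs_sub_left_of_mem_uIcc hz) L.coe_nonneg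
  have := (convex_uIcc ξ y).norm_image_sub_le_of_norm_hasDerivWithin_le hderiv hbound
    left_mem_uIcc right_mem_uIcc
  rw [Real.norm_eq_abs, Real.norm_eq_abs] at this
  calc |F y - F ξ - deriv F ξ * (y - ξ)| = |F y - deriv F ξ * y - (F ξ - deriv F ξ * ξ)| := by
        ring_nf
    _ ≤ L * |y - ξ| * |y - ξ| := this
    _ = L * |y - ξ| ^ 2 := by ring

theorem integrable_comp_of_ae_mem_isCompact {α E β : Type*} [MeasurableSpace α] {μ : Measure α}
    [IsFiniteMeasure μ] [TopologicalSpace E] [NormedAddCommGroup β] {f : α → E}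
    (hf : AEStronglyMeasurable f μ) {K : Set E} (hK : IsCompact K) (hfK : ∀ᵐ t ∂μ, f t ∈ K)
    {G : E → β} (hG : Continuous G) : Integrable (fun t => G (f t)) μ := by
  obtain ⟨C, hC⟩ := hK.exists_bound_of_continuousOn hG.continuousOn
  exact .of_bound (hG.comp_aestronglyMeasurable hf) C (hfK.mono fun t ht => hC _ ht)

theorem abs_integral_comp_sub_le_of_integral_eq {α : Type*} [MeasurableSpace α] {μ : Measure α}
    [IsProbabilityMeasure μ] {F : ℝ → ℝ} {L : NNReal} (hF : Differentiable ℝ F)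
    (hF' : LipschitzWith L (deriv F)) {g : α → ℝ} {ξ : ℝ} (hg : Integrable g μ)
    (hmean : ∫ t, g t ∂μ = ξ) (hFg : Integrable (fun t => F (g t)) μ)
    (hsq : Integrable (fun t => |g t - ξ| ^ 2) μ) :
    |∫ t, F (g t) ∂μ - F ξ| ≤ L * ∫ t, |g t - ξ| ^ 2 ∂μ := by
  have hlin : ∫ t, deriv F ξ * (g t - ξ) ∂μ = 0 := by
    rw [integral_const_mul, integral_sub hg (integrable_const ξ), hmean, integral_const]
    simp
  have hlin_int : Integrable (fun t => deriv F ξ * (g t - ξ)) μ :=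
    (hg.sub (integrable_const ξ)).const_mul _
  calc |∫ t, F (g t) ∂μ - F ξ|
        = |∫ t, (F (g t) - F ξ - deriv F ξ * (g t - ξ)) ∂μ| := by
          rw [integral_sub (f := fun t => F (g t) - F ξ) (hFg.sub (integrable_const _)) hlin_int,
            hlin, integral_sub hFg (integrable_const _), integral_const]
          simp
    _ ≤ ∫ t, L * |g t - ξ| ^ 2 ∂μ := by
          rw [← Real.norm_eq_abs]
          exact norm_integral_le_of_norm_le (hsq.const_mul _) (ae_of_all _ fun t =>
            abs_sub_sub_deriv_mul_le_of_lipschitzWith hF hF' ξ (g t))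
    _ = L * ∫ t, |g t - ξ| ^ 2 ∂μ := integral_const_mul _ _

theorem setIntegral_Icc_ite_lt {θ : ℝ} (h0 : 0 ≤ θ) (h1 : θ ≤ 1) (u v : ℝ) :
    ∫ t in Icc (0 : ℝ) 1, (if t < θ then u else v) = θ * u + (1 - θ) * v := by
  have hsplit : (fun t : ℝ => if t < θ then u else v) =
      fun t => (Iio θ).indicator (fun _ => u - v) t + v := by
    ext t; by_cases ht : t < θ <;> simp [ht]
  have hIco : Iio θ ∩ Icc (0 : ℝ) 1 = Ico 0 θ := by
    ext t
    simp only [mem_inter_iff, mem_Iio, mem_Icc, mem_Ico]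
    exact ⟨fun ⟨ht, h0t, _⟩ => ⟨h0t, ht⟩, fun ⟨h0t, ht⟩ => ⟨ht, h0t, by linarith⟩⟩
  rw [hsplit, integral_add ((integrable_const _).indicator measurableSet_Iio) (integrable_const _),
    integral_indicator measurableSet_Iio, Measure.restrict_restrict measurableSet_Iio, hIco,
    setIntegral_const, setIntegral_const]
  simp [h0]
  ring

section Grid

variable {N : ℕ} {x : ℕ → ℝ}

theorem jstar_le (ξ : ℝ) : jstar N x ξ ≤ N := by
  unfold jstar
  split_ifs with h
  exacts [h.choose_spec.1, le_rfl]

theorem mem_Icc_jstar {ξ : ℝ} (hξ : ξ ∈ Icc (x 0) (x (N + 1))) :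
    ξ ∈ Icc (x (jstar N x ξ)) (x (jstar N x ξ + 1)) := by
  unfold jstar
  split_ifs with h
  · exact ⟨h.choose_spec.2.1, h.choose_spec.2.2.le⟩
  · push Not at h
    have hbelow : ∀ j ≤ N + 1, x j ≤ ξ := by
      intro j hj
      induction j with
      | zero => exact hξ.1
      | succ j ih => exact h j (by omega) (ih (by omega))
    exact ⟨hbelow N (by omega), hξ.2⟩

theorem grid_mono (hmono : ∀ j ≤ N, x j ≤ x (j + 1)) {i j : ℕ} (hij : i ≤ j) (hj : j ≤ N + 1) :
    x i ≤ x j := by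
  induction j, hij using Nat.le_induction with
  | base => exact le_rfl
  | succ j _ ih => exact (ih (by omega)).trans (hmono j (by omega))

theorem jstar_eq_iff (hmono : ∀ j ≤ N, x j ≤ x (j + 1)) (ξ : ℝ) (n : ℕ) :
    jstar N x ξ = n ↔ (n ≤ N ∧ x n ≤ ξ ∧ ξ < x (n + 1)) ∨
      (n = N ∧ ¬ ∃ j, j ≤ N ∧ x j ≤ ξ ∧ ξ < x (j + 1)) := by
  have hunique : ∀ i j, i ≤ N ∧ x i ≤ ξ ∧ ξ < x (i + 1) → j ≤ N ∧ x j ≤ ξ ∧ ξ < x (j + 1) →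
      ¬ i < j := fun i j hi hj hij =>
    (grid_mono hmono hij (by omega)).not_gt (hj.2.1.trans_lt hi.2.2)
  unfold jstar
  split_ifs with h
  · have := h.choose_spec
    constructor
    · rintro rfl; exact Or.inl this
    · rintro (hn | ⟨-, hn⟩)
      · exact le_antisymm (not_lt.1 (hunique n _ hn this)) (not_lt.1 (hunique _ n this hn))
      · exact absurd h hn
  · constructor
    · rintro rfl; exact Or.inr ⟨rfl, h⟩
    · rintro (hn | ⟨rfl, -⟩)
      exacts [absurd ⟨n, hn⟩ h, rfl]

theorem measurable_jstar (hmono : ∀ j ≤ N, x j ≤ x (j + 1)) : Measurable (jstar N x) :=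
  measurable_to_countable' fun n => by
    rw [show jstar N x ⁻¹' {n} = {ξ | (n ≤ N ∧ x n ≤ ξ ∧ ξ < x (n + 1)) ∨
        (n = N ∧ ¬ ∃ j, j ≤ N ∧ x j ≤ ξ ∧ ξ < x (j + 1))} from
      ext fun ξ => jstar_eq_iff hmono ξ n]
    measurability

theorem measurable_dualQ (hmono : ∀ j ≤ N, x j ≤ x (j + 1)) :
    Measurable fun p : ℝ × ℝ => dualQ N x p.1 p.2 := by
  have hsegment : Measurable fun q : (ℝ × ℝ) × ℕ => if x (q.2 + 1) = x q.2 then q.1.1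
      else if q.1.2 < (x (q.2 + 1) - q.1.1) / (x (q.2 + 1) - x q.2) then x q.2
      else x (q.2 + 1) :=
    measurable_from_prod_countable_left fun j => by
      dsimp only
      exact Measurable.ite (.const _) measurable_fst
        (Measurable.ite (measurableSet_lt measurable_snd (by fun_prop)) measurable_const
          measurable_const)
  exact hsegment.comp (measurable_id.prodMk ((measurable_jstar hmono).comp measurable_fst))

theorem dualQ_mem_Icc (hmono : ∀ j ≤ N, x j ≤ x (j + 1)) {ξ : ℝ}
    (hξ : ξ ∈ Icc (x 0) (x (N + 1))) (lam : ℝ) : dualQ N x ξ lam ∈ Icc (x 0) (x (N + 1)) := by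
  have hj := jstar_le (N := N) (x := x) ξ
  have hseg := mem_Icc_jstar hξ
  refine Icc_subset_Icc (grid_mono hmono (Nat.zero_le (jstar N x ξ)) (by omega))
    (grid_mono hmono (i := jstar N x ξ + 1) (by omega) le_rfl) ?_
  unfold dualQ
  split_ifs
  exacts [hseg, left_mem_Icc.2 (hseg.1.trans hseg.2), right_mem_Icc.2 (hseg.1.trans hseg.2)]

theorem setIntegral_dualQ {ξ : ℝ} (hξ : ξ ∈ Icc (x 0) (x (N + 1))) :
    ∫ lam in Icc (0 : ℝ) 1, dualQ N x ξ lam = ξ := by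
  obtain ⟨hu, hv⟩ := mem_Icc_jstar hξ
  unfold dualQ
  set u := x (jstar N x ξ)
  set v := x (jstar N x ξ + 1)
  by_cases huv : v = u
  · simp [huv]
  · have hlt : 0 < v - u := sub_pos.2 (lt_of_le_of_ne (hu.trans hv) (Ne.symm huv))
    simp only [huv, if_false]
    rw [setIntegral_Icc_ite_lt (div_nonneg (by linarith) hlt.le)
      ((div_le_one hlt).2 (by linarith))]
    field_simp
    ring

end Grid

theorem abs_setIntegral_sub_comp_dualQ_le {N : ℕ} {x : ℕ → ℝ}
    (hmono : ∀ j ≤ N, x j ≤ x (j + 1)) {F : ℝ → ℝ} {L : NNReal} (hF : Differentiable ℝ F)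
    (hF' : LipschitzWith L (deriv F)) {ξ : ℝ} (hξ : ξ ∈ Icc (x 0) (x (N + 1))) :
    |∫ lam in Icc (0 : ℝ) 1, (F ξ - F (dualQ N x ξ lam))| ≤
      L * ∫ lam in Icc (0 : ℝ) 1, |ξ - dualQ N x ξ lam| ^ 2 := by
  have : IsProbabilityMeasure (volume.restrict (Icc (0 : ℝ) 1)) := ⟨by simp⟩
  have hint : ∀ G : ℝ → ℝ, Continuous G →
      Integrable (fun lam => G (dualQ N x ξ lam)) (volume.restrict (Icc 0 1)) := fun G hG =>
    integrable_comp_of_ae_mem_isCompact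
      ((measurable_dualQ hmono).comp measurable_prodMk_left).aestronglyMeasurable
      isCompact_Icc (ae_of_all _ (dualQ_mem_Icc hmono hξ)) hG
  have := abs_integral_comp_sub_le_of_integral_eq hF hF' (hint id continuous_id)
    (setIntegral_dualQ hξ) (hint F hF.continuous) (hint (fun y => |y - ξ| ^ 2) (by fun_prop))
  rw [integral_sub (integrable_const _) (hint F hF.continuous), integral_const, abs_sub_comm]
  simpa [abs_sub_comm] using this

theorem abs_integral_prod_sub_comp_dualQ_le {N : ℕ} {x : ℕ → ℝ}
    (hmono : ∀ j ≤ N, x j ≤ x (j + 1)) {F : ℝ → ℝ} {L : NNReal} (hF : Differentiable ℝ F)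
    (hF' : LipschitzWith L (deriv F)) {μ : Measure ℝ} [IsFiniteMeasure μ]
    (hμ : ∀ᵐ ξ ∂μ, ξ ∈ Icc (x 0) (x (N + 1))) :
    |∫ p, F p.1 ∂(μ.prod (volume.restrict (Icc (0 : ℝ) 1))) -
        ∫ p, F (dualQ N x p.1 p.2) ∂(μ.prod (volume.restrict (Icc (0 : ℝ) 1)))| ≤
      L * ∫ p, |p.1 - dualQ N x p.1 p.2| ^ 2 ∂(μ.prod (volume.restrict (Icc (0 : ℝ) 1))) := by
  set ν := μ.prod (volume.restrict (Icc (0 : ℝ) 1))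
  set J : ℝ × ℝ → ℝ := fun p => dualQ N x p.1 p.2
  have hJ : Measurable J := measurable_dualQ hmono
  have hFc := hF.continuous
  have hgrid : ∀ᵐ p ∂ν, (p.1, J p) ∈ Icc (x 0) (x (N + 1)) ×ˢ Icc (x 0) (x (N + 1)) :=
    (Measure.quasiMeasurePreserving_fst.ae hμ).mono fun p hp => ⟨hp, dualQ_mem_Icc hmono hp _⟩
  have hint : ∀ G : ℝ × ℝ → ℝ, Continuous G → Integrable (fun p => G (p.1, J p)) ν :=
    fun G hG => integrable_comp_of_ae_mem_isCompact
      (measurable_fst.prodMk hJ).aestronglyMeasurable (isCompact_Icc.prod isCompact_Icc) hgrid hG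
  have hFX : Integrable (fun p => F p.1) ν := hint (fun q => F q.1) (by fun_prop)
  have hFJ : Integrable (fun p => F (J p)) ν := hint (fun q => F q.2) (by fun_prop)
  have hsq : Integrable (fun p => L * |p.1 - J p| ^ 2) ν :=
    (hint (fun q => |q.1 - q.2| ^ 2) (by fun_prop)).const_mul (L : ℝ)
  rw [← integral_sub hFX hFJ, integral_prod (fun p => F p.1 - F (J p)) (hFX.sub hFJ),
    ← integral_const_mul, integral_prod _ hsq, ← Real.norm_eq_abs]
  refine norm_integral_le_of_norm_le hsq.integral_prod_left ?_
  filter_upwards [hμ] with ξ hξ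
  rw [integral_const_mul]
  exact abs_setIntegral_sub_comp_dualQ_le hmono hF hF' hξ

theorem ProbabilityTheory.IndepFun.integral_comp_eq_integral_prod {Ω α β : Type*}
    [MeasurableSpace Ω] [MeasurableSpace α] [MeasurableSpace β] {P : Measure Ω} [IsFiniteMeasure P]
    {X : Ω → α} {Y : Ω → β} (hXY : IndepFun X Y P) (hX : Measurable X) (hY : Measurable Y)
    {G : α × β → ℝ} (hG : Measurable G) :
    ∫ ω, G (X ω, Y ω) ∂P = ∫ p, G p ∂((P.map X).prod (P.map Y)) := by
  rw [← hXY.map_prod_eq_prod_map_map hX.aemeasurable hY.aemeasurable,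
    integral_map (hX.prodMk hY).aemeasurable hG.aestronglyMeasurable]

theorem dualQ_second_order_general {Ω : Type*} [MeasurableSpace Ω] (P : Measure Ω) [IsProbabilityMeasure P]
    (a b : ℝ) (N : ℕ) (x : ℕ → ℝ)
    (hmono : ∀ j ≤ N, x j ≤ x (j + 1)) (hx0 : x 0 = a) (hxN : x (N + 1) = b)
    (X : Ω → ℝ) (hXmeas : Measurable X) (hXab : ∀ᵐ ω ∂P, X ω ∈ Set.Icc a b)
    (Λ : Ω → ℝ) (hΛmeas : Measurable Λ)
    (hΛ : Measure.map Λ P = volume.restrict (Set.Icc (0 : ℝ) 1))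
    (hindep : IndepFun X Λ P)
    (F : ℝ → ℝ) (L : NNReal) (hF : ContDiff ℝ 1 F) (hFlip : LipschitzWith L (deriv F)) :
    |∫ ω, F (X ω) ∂P - ∫ ω, F (dualQ N x (X ω) (Λ ω)) ∂P| ≤
      (L : ℝ) * ∫ ω, |X ω - dualQ N x (X ω) (Λ ω)| ^ 2 ∂P := by
  subst hx0 hxN
  have hFm : Measurable F := hF.continuous.measurable
  have hJ := measurable_dualQ hmono
  have hlaw : ∀ G : ℝ × ℝ → ℝ, Measurable G → ∫ ω, G (X ω, Λ ω) ∂P =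
      ∫ p, G p ∂((P.map X).prod (volume.restrict (Icc (0 : ℝ) 1))) := fun G hG => by
    rw [hindep.integral_comp_eq_integral_prod hXmeas hΛmeas hG, hΛ]
  have e₁ : ∫ ω, F (X ω) ∂P = _ := hlaw (fun p => F p.1) (by fun_prop)
  have e₂ : ∫ ω, F (dualQ N x (X ω) (Λ ω)) ∂P = _ := hlaw _ (hFm.comp hJ)
  have e₃ : ∫ ω, |X ω - dualQ N x (X ω) (Λ ω)| ^ 2 ∂P = _ :=
    hlaw (fun p => |p.1 - dualQ N x p.1 p.2| ^ 2) (by fun_prop)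
  rw [e₁, e₂, e₃]
  exact abs_integral_prod_sub_comp_dualQ_le hmono (hF.differentiable one_ne_zero) hFlip
    ((ae_map_iff hXmeas.aemeasurable measurableSet_Icc).2 hXab)

/-- **Second order estimate for dual quantization.** Let `F : ℝ → ℝ` be
continuously differentiable with `L`-Lipschitz derivative. Let `X` be a real random variable
with `P(X ∈ [a,b]) = 1` and let `Λ` be uniformly distributed on `[0,1]` and independent of `X`.
Then for every grid `Γ` in `[a,b]`:
`|E F(X) − E F(J_Γ(X,Λ))| ≤ L · E|X − J_Γ(X,Λ)|²`. -/
theorem dualQ_second_order {Ω : Type*} [MeasurableSpace Ω] (P : Measure Ω) [IsProbabilityMeasure P]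
    (a b : ℝ) (hab : a < b) (N : ℕ) (x : ℕ → ℝ)
    (hmono : ∀ j ≤ N, x j ≤ x (j + 1)) (hx0 : x 0 = a) (hxN : x (N + 1) = b)
    (X : Ω → ℝ) (hXmeas : Measurable X) (hXab : ∀ᵐ ω ∂P, X ω ∈ Set.Icc a b)
    (Λ : Ω → ℝ) (hΛmeas : Measurable Λ)
    (hΛ : Measure.map Λ P = volume.restrict (Set.Icc (0 : ℝ) 1))
    (hindep : IndepFun X Λ P)
    (F : ℝ → ℝ) (L : NNReal) (hF : ContDiff ℝ 1 F) (hFlip : LipschitzWith L (deriv F)) :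
    |∫ ω, F (X ω) ∂P - ∫ ω, F (dualQ N x (X ω) (Λ ω)) ∂P| ≤
      (L : ℝ) * ∫ ω, |X ω - dualQ N x (X ω) (Λ ω)| ^ 2 ∂P :=
  dualQ_second_order_general P a b N x hmono hx0 hxN X hXmeas hXab Λ hΛmeas hΛ hindep F L hF hFlip
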